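/- arXiv:1511.02484 — 8 statements merged into one kernel-verified Lean document; each statement's English description precedes it below -/
import Mathlib

section
/- Let x be an s-t flow in a directed graph G = (V, A) with no arcs entering s, and let e ∈ A. Then there exists an s-t flow x' with x' ≤ x componentwise, x'(e) = 0, and value(x') ≥ value(x) − x(e), where value(x) = x(δ⁺(s)). (I.e., the s-t flow polytope is w-down-closed for w = χ^{δ⁺(s)}.) -/
/-!
Among the flows `y ≤ x` with `y e = 0` (a compact set) take one of maximal value. The residual
`x - y` is again a flow. If `t` could be reached from `s` through arcs `a ≠ e` with `y a < x a`,
then `y` could be augmented along such a walk, contradicting maximality. Otherwise the set `R` of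
vertices reached from `s` is an `s`-`t` cut that `x - y` leaves only through `e`, so summing
conservation over `R` bounds the value of `x - y` by `x e`.
-/

open Finset Filter Topology

section Flow

variable {V A : Type*} (tail head : A → V)

inductive IsWalk : V → V → List A → Prop
  | nil (u : V) : IsWalk u u []
  | cons {a : A} {v : V} {L : List A} : IsWalk (head a) v L → IsWalk (tail a) v (a :: L)

variable [Fintype A] [DecidableEq V]

def netOut (v : V) : (A → ℝ) →ₗ[ℝ] ℝ :=
  ∑ a ∈ univ.filter (fun a => tail a = v), LinearMap.proj a -
    ∑ a ∈ univ.filter (fun a => head a = v), LinearMap.proj a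

def IsFlow (s t : V) (x : A → ℝ) : Prop :=
  0 ≤ x ∧ ∀ v, v ≠ s → v ≠ t → netOut tail head v x = 0

def flowsBelowAvoiding (s t : V) (x : A → ℝ) (e : A) : Set (A → ℝ) :=
  {y | IsFlow tail head s t y ∧ y ≤ x ∧ y e = 0}

variable {tail head}

omit [Fintype A] [DecidableEq V] in
theorem exists_isWalk_of_reflTransGen {P : A → Prop} {u v : V}
    (h : Relation.ReflTransGen (fun p q => ∃ a, P a ∧ tail a = p ∧ head a = q) u v) :
    ∃ L, IsWalk tail head u v L ∧ ∀ a ∈ L, P a := by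
  induction h using Relation.ReflTransGen.head_induction_on with
  | refl => exact ⟨[], .nil v, by simp⟩
  | head hr _ ih =>
    obtain ⟨a, ha, rfl, rfl⟩ := hr
    obtain ⟨L, hL, hLP⟩ := ih
    exact ⟨a :: L, hL.cons, by simpa [ha] using hLP⟩

theorem netOut_apply (v : V) (x : A → ℝ) :
    netOut tail head v x = ∑ a ∈ univ.filter (fun a => tail a = v), x a -
      ∑ a ∈ univ.filter (fun a => head a = v), x a := by
  simp [netOut]

theorem isFlow_iff {s t : V} {x : A → ℝ} :
    IsFlow tail head s t x ↔ (∀ a, 0 ≤ x a) ∧ ∀ v, v ≠ s → v ≠ t →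
      ∑ a ∈ univ.filter (fun a => tail a = v), x a =
        ∑ a ∈ univ.filter (fun a => head a = v), x a := by
  simp only [IsFlow, netOut_apply, sub_eq_zero, Pi.le_def, Pi.zero_apply]

theorem netOut_eq_sum_tail {s : V} (hNoIn : ∀ a, head a ≠ s) (x : A → ℝ) :
    netOut tail head s x = ∑ a ∈ univ.filter (fun a => tail a = s), x a := by
  simp [netOut_apply, hNoIn]

theorem netOut_single [DecidableEq A] (v : V) (a : A) :
    netOut tail head v (Pi.single a 1) =
      (if tail a = v then 1 else 0) - (if head a = v then 1 else 0) := by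
  simp [netOut_apply, sum_pi_single']

theorem IsWalk.netOut_count [DecidableEq A] {u w : V} {L : List A}
    (hL : IsWalk tail head u w L) (v : V) :
    netOut tail head v (fun a => (L.count a : ℝ)) =
      (if u = v then 1 else 0) - (if w = v then 1 else 0) := by
  induction hL with
  | nil u => simp [← Pi.zero_def]
  | @cons a w L _ ih =>
    have hcount :
        (fun b => ((a :: L).count b : ℝ)) = Pi.single a 1 + fun b => (L.count b : ℝ) := by
      funext b
      by_cases hb : b = a
      · subst hb; simp [add_comm]
      · simp [hb, Ne.symm hb]
    rw [hcount, map_add, netOut_single, ih]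
    ring

theorem sum_netOut (R : Finset V) (x : A → ℝ) :
    ∑ v ∈ R, netOut tail head v x =
      ∑ a, ((if tail a ∈ R then x a else 0) - (if head a ∈ R then x a else 0)) := by
  simp only [netOut_apply, sum_sub_distrib, sum_filter]
  rw [sum_comm, sum_comm (s := R)]
  simp [sum_ite_eq]

theorem netOut_le_of_cut [DecidableEq A] {s t : V} {x : A → ℝ} (hx : IsFlow tail head s t x)
    {e : A} {R : Finset V} (hs : s ∈ R) (ht : t ∉ R)
    (hR : ∀ a, a ≠ e → 0 < x a → tail a ∈ R → head a ∈ R) :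
    netOut tail head s x ≤ x e := by
  calc netOut tail head s x = ∑ v ∈ R, netOut tail head v x :=
        (sum_eq_single_of_mem s hs fun v hv hvs => hx.2 v hvs (ne_of_mem_of_not_mem hv ht)).symm
    _ = ∑ a, ((if tail a ∈ R then x a else 0) - (if head a ∈ R then x a else 0)) :=
        sum_netOut R x
    _ ≤ ∑ a, if a = e then x a else 0 := sum_le_sum fun a _ => ?_
    _ = x e := by simp
  have hxa : 0 ≤ x a := hx.1 a
  by_cases hae : a = e
  · rw [if_pos hae]; split_ifs <;> linarith
  · have hcut : tail a ∈ R → head a ∉ R → x a ≤ 0 := fun h1 h2 =>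
      not_lt.1 fun hpos => h2 (hR a hae hpos h1)
    rw [if_neg hae]; split_ifs <;> first | linarith | linarith [hcut ‹_› ‹_›]

omit [DecidableEq V] in
theorem exists_pos_add_smul_count_le [DecidableEq A] {x y : A → ℝ} {L : List A} (hle : y ≤ x)
    (hlt : ∀ a ∈ L, y a < x a) : ∃ δ : ℝ, 0 < δ ∧ y + δ • (fun a => (L.count a : ℝ)) ≤ x := by
  have hsmall : ∀ᶠ δ in 𝓝[>] (0 : ℝ), ∀ a, y a + δ * L.count a ≤ x a := by
    refine eventually_all.2 fun a => ?_
    by_cases ha : a ∈ L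
    · have hc : Continuous fun δ : ℝ => y a + δ * L.count a := by fun_prop
      have hlim : Tendsto (fun δ : ℝ => y a + δ * L.count a) (𝓝 0) (𝓝 (y a)) := by
        simpa using hc.tendsto 0
      exact (hlim.eventually (eventually_le_nhds (hlt a ha))).filter_mono nhdsWithin_le_nhds
    · exact .of_forall fun δ => by simpa [List.count_eq_zero_of_not_mem ha] using hle a
  obtain ⟨δ, hδ, hδpos⟩ := (hsmall.and self_mem_nhdsWithin).exists
  exact ⟨δ, hδpos, fun a => hδ a⟩

theorem isCompact_flowsBelowAvoiding (s t : V) (x : A → ℝ) (e : A) :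
    IsCompact (flowsBelowAvoiding tail head s t x e) := by
  refine isCompact_Icc.of_isClosed_subset ?_ (fun y hy => ⟨hy.1.1, hy.2.1⟩ : _ ⊆ Set.Icc 0 x)
  have hcont (v : V) : Continuous (netOut tail head v) :=
    (netOut tail head v).continuous_of_finiteDimensional
  simp only [flowsBelowAvoiding, IsFlow, Set.ofPred_and, Set.ofPred_forall]
  exact ((isClosed_le continuous_const continuous_id).inter
    (isClosed_iInter fun v => isClosed_iInter fun _ => isClosed_iInter fun _ =>
      isClosed_eq (hcont v) continuous_const)).inter
    ((isClosed_le continuous_id continuous_const).inter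
      (isClosed_eq (continuous_apply e) continuous_const))

theorem netOut_sub_le_of_isMaxOn [Fintype V] [DecidableEq A] {s t : V} (hst : s ≠ t)
    {x y : A → ℝ} {e : A} (hx : IsFlow tail head s t x)
    (hy : y ∈ flowsBelowAvoiding tail head s t x e)
    (hmax : IsMaxOn (netOut tail head s) (flowsBelowAvoiding tail head s t x e) y) :
    netOut tail head s x - x e ≤ netOut tail head s y := by
  classical
  obtain ⟨⟨hy0, hycons⟩, hyx, hye⟩ := hy
  let r : V → V → Prop := fun p q => ∃ a, (a ≠ e ∧ y a < x a) ∧ tail a = p ∧ head a = q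
  by_cases hreach : Relation.ReflTransGen r s t
  · exfalso
    obtain ⟨L, hL, hLP⟩ := exists_isWalk_of_reflTransGen hreach
    obtain ⟨δ, hδ, hδx⟩ := exists_pos_add_smul_count_le hyx fun a ha => (hLP a ha).2
    set y' := y + δ • fun a => (L.count a : ℝ)
    have hnet (v : V) : netOut tail head v y' =
        netOut tail head v y + δ * ((if s = v then 1 else 0) - if t = v then 1 else 0) := by
      rw [map_add, map_smul, hL.netOut_count, smul_eq_mul]
    have hy' : y' ∈ flowsBelowAvoiding tail head s t x e := by
      refine ⟨⟨?_, fun v hvs hvt => ?_⟩, hδx, ?_⟩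
      · exact add_nonneg hy0 (smul_nonneg hδ.le fun a => Nat.cast_nonneg _)
      · rw [hnet, hycons v hvs hvt, if_neg (Ne.symm hvs), if_neg (Ne.symm hvt)]; ring
      · simp [y', hye, List.count_eq_zero_of_not_mem fun he => (hLP e he).1 rfl]
    have hle := isMaxOn_iff.1 hmax y' hy'
    rw [hnet, if_pos rfl, if_neg hst.symm] at hle
    linarith
  · have hres : IsFlow tail head s t (x - y) := ⟨sub_nonneg.2 hyx, fun v hvs hvt => by
      rw [map_sub, hx.2 v hvs hvt, hycons v hvs hvt, sub_zero]⟩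
    have hcut := netOut_le_of_cut hres (R := univ.filter (Relation.ReflTransGen r s))
      (mem_filter.2 ⟨mem_univ s, .refl⟩) (fun ht => hreach (mem_filter.1 ht).2)
      fun a hae hpos hta => by
        simp only [mem_filter, mem_univ, true_and] at hta ⊢
        exact hta.tail ⟨a, ⟨hae, sub_pos.1 hpos⟩, rfl, rfl⟩
    rw [map_sub, Pi.sub_apply, hye] at hcut
    linarith

end Flow

/-- The `s`-`t` flow polytope is `w`-down-closed for `w = χ^{δ⁺(s)}`: for any
`s`-`t` flow `x` and arc `e`, there is a flow `x' ≤ x` with `x'(e) = 0` and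
value at least `value(x) - x(e)`. -/
theorem flow_wDownClosed {V A : Type*} [Fintype V] [Fintype A]
    [DecidableEq V] (tail head : A → V) (s t : V) (hst : s ≠ t)
    (hNoIn : ∀ a : A, head a ≠ s)
    (x : A → ℝ) (hx0 : ∀ a, 0 ≤ x a)
    (hcons : ∀ v : V, v ≠ s → v ≠ t →
      ∑ a ∈ univ.filter (fun a => tail a = v), x a =
        ∑ a ∈ univ.filter (fun a => head a = v), x a)
    (e : A) :
    ∃ x' : A → ℝ, (∀ a, 0 ≤ x' a) ∧
      (∀ v : V, v ≠ s → v ≠ t →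
        ∑ a ∈ univ.filter (fun a => tail a = v), x' a =
          ∑ a ∈ univ.filter (fun a => head a = v), x' a) ∧
      (∀ a, x' a ≤ x a) ∧ x' e = 0 ∧
      ∑ a ∈ univ.filter (fun a => tail a = s), x' a ≥
        (∑ a ∈ univ.filter (fun a => tail a = s), x a) - x e := by
  classical
  have hx : IsFlow tail head s t x := isFlow_iff.2 ⟨hx0, hcons⟩
  obtain ⟨y, hy, hmax⟩ := (isCompact_flowsBelowAvoiding s t x e).exists_isMaxOn
    ⟨0, ⟨le_rfl, fun v _ _ => map_zero _⟩, hx.1, rfl⟩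
    (netOut tail head s).continuous_of_finiteDimensional.continuousOn
  have hval := netOut_sub_le_of_isMaxOn hst hx hy hmax
  rw [netOut_eq_sum_tail hNoIn, netOut_eq_sum_tail hNoIn] at hval
  obtain ⟨hy0, hycons⟩ := isFlow_iff.1 hy.1
  exact ⟨y, hy0, hycons, hy.2.1, hy.2.2, hval⟩
end

section
/- Let P = {x ∈ ℝ^N : Ax ≤ b, x ≥ 0} be a nonempty polytope, w ∈ {0,1}^N, and suppose the vertices of P form a w-down-closed set. Let r ∈ ℝ_{≥0}^N and U = {e ∈ N : r(e) ≥ 1}. Then there exists an optimal solution x to max{(w − r)ᵀx : x ∈ P} with x(e) = 0 for all e ∈ U. -/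
open Finset

/-- Clipping lemma: if the polytope `P = {x : Ax ≤ b, x ≥ 0}` is the convex
hull of a `w`-down-closed set `X` containing all its extreme points, then for
any `r ≥ 0`, with `U = {e : r(e) ≥ 1}`, the LP `max {(w-r)ᵀx : x ∈ P}` has an
optimal solution vanishing on `U`. -/
theorem clipping_lemma {m n : ℕ} (A : Matrix (Fin m) (Fin n) ℝ) (b : Fin m → ℝ)
    (X : Set (Fin n → ℝ)) (hXpos : ∀ x ∈ X, ∀ i, 0 ≤ x i)
    (w : Fin n → ℝ) (hw : ∀ i, w i = 0 ∨ w i = 1)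
    (hwdc : ∀ x ∈ X, ∀ e : Fin n, 0 < x e →
      ∃ x' ∈ X, (∀ i, x' i ≤ x i) ∧ x' e = 0 ∧
        ∑ i, w i * x' i ≥ ∑ i, w i * x i - x e)
    (hP : {x : Fin n → ℝ | A.mulVec x ≤ b ∧ 0 ≤ x} = convexHull ℝ X)
    (hbdd : Bornology.IsBounded {x : Fin n → ℝ | A.mulVec x ≤ b ∧ 0 ≤ x})
    (hne : ({x : Fin n → ℝ | A.mulVec x ≤ b ∧ 0 ≤ x}).Nonempty)
    (hext : Set.extremePoints ℝ {x : Fin n → ℝ | A.mulVec x ≤ b ∧ 0 ≤ x} ⊆ X)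
    (r : Fin n → ℝ) (hr : ∀ i, 0 ≤ r i) :
    ∃ x ∈ {x : Fin n → ℝ | A.mulVec x ≤ b ∧ 0 ≤ x},
      (∀ e : Fin n, 1 ≤ r e → x e = 0) ∧
      ∀ y ∈ {x : Fin n → ℝ | A.mulVec x ≤ b ∧ 0 ≤ x},
        ∑ i, (w i - r i) * y i ≤ ∑ i, (w i - r i) * x i := by
  classical
  set P : Set (Fin n → ℝ) := {x : Fin n → ℝ | A.mulVec x ≤ b ∧ 0 ≤ x} with hPdef
  have hXP : X ⊆ P := by
    rw [hP]; exact subset_convexHull ℝ X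
  -- P is closed
  have hclosed : IsClosed P := by
    have h1 : IsClosed {x : Fin n → ℝ | A.mulVec x ≤ b} := by
      have : {x : Fin n → ℝ | A.mulVec x ≤ b} = ⋂ j, {x | A.mulVec x j ≤ b j} := by
        ext x; simp [Pi.le_def]
      rw [this]
      refine isClosed_iInter fun j => isClosed_le ?_ continuous_const
      have : (fun x : Fin n → ℝ => A.mulVec x j) = fun x => ∑ i, A j i * x i := by
        ext x; simp [Matrix.mulVec, dotProduct]
      rw [this]
      exact continuous_finset_sum _ fun i _ => continuous_const.mul (continuous_apply i)
    have h2 : IsClosed {x : Fin n → ℝ | 0 ≤ x} := by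
      have : {x : Fin n → ℝ | 0 ≤ x} = ⋂ i, {x | 0 ≤ x i} := by
        ext x; simp [Pi.le_def]
      rw [this]
      exact isClosed_iInter fun i => isClosed_le continuous_const (continuous_apply i)
    have : P = {x : Fin n → ℝ | A.mulVec x ≤ b} ∩ {x : Fin n → ℝ | 0 ≤ x} := rfl
    rw [this]; exact h1.inter h2
  have hcomp : IsCompact P := Metric.isCompact_of_isClosed_isBounded hclosed hbdd
  -- the objective as a continuous linear map
  let l : (Fin n → ℝ) →L[ℝ] ℝ :=
    { toFun := fun x => ∑ i, (w i - r i) * x i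
      map_add' := by
        intro x y; simp [mul_add, Finset.sum_add_distrib]
      map_smul' := by
        intro c x
        simp only [Pi.smul_apply, smul_eq_mul, RingHom.id_apply, Finset.mul_sum]
        congr 1; ext i; ring
      cont := by
        show Continuous fun x : Fin n → ℝ => ∑ i, (w i - r i) * x i
        exact continuous_finset_sum _ fun i _ =>
          continuous_const.mul (continuous_apply i) }
  have hlval : ∀ x, l x = ∑ i, (w i - r i) * x i := fun _ => rfl
  -- the exposed face of maximizers
  set B : Set (Fin n → ℝ) := {x ∈ P | ∀ y ∈ P, l y ≤ l x} with hBdef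
  have hBne : B.Nonempty := by
    obtain ⟨x, hxP, hxmax⟩ := hcomp.exists_isMaxOn hne l.continuous.continuousOn
    exact ⟨x, hxP, fun y hy => hxmax hy⟩
  have hBexp : IsExposed ℝ P B := fun _ => ⟨l, rfl⟩
  have hBB : IsCompact B := hBexp.isCompact hcomp
  obtain ⟨z, hz⟩ := hBB.extremePoints_nonempty hBne
  have hzX : z ∈ X := hext ((hBexp.isExtreme.extremePoints_subset_extremePoints) hz)
  have hzmax : ∀ y ∈ P, l y ≤ l z := (extremePoints_subset hz).2
  -- induction on the number of bad coordinates
  have key : ∀ k : ℕ, ∀ x ∈ X, (Finset.univ.filter (fun e => 1 ≤ r e ∧ 0 < x e)).card ≤ k →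
      (∀ y ∈ P, l y ≤ l x) →
      ∃ z ∈ P, (∀ e : Fin n, 1 ≤ r e → z e = 0) ∧ ∀ y ∈ P, l y ≤ l z := by
    intro k
    induction k with
    | zero =>
      intro x hxX hcard hmax
      refine ⟨x, hXP hxX, fun e hre => ?_, hmax⟩
      by_contra h
      have : 0 < x e := lt_of_le_of_ne (hXpos x hxX e) (Ne.symm h)
      have : e ∈ Finset.univ.filter (fun e => 1 ≤ r e ∧ 0 < x e) := by
        simp [hre, this]
      simp [Finset.card_eq_zero.mp (Nat.le_zero.mp hcard)] at this
    | succ k ih =>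
      intro x hxX hcard hmax
      by_cases hempty : (Finset.univ.filter (fun e => 1 ≤ r e ∧ 0 < x e)) = ∅
      · exact ih x hxX (by simp [hempty]) hmax
      · obtain ⟨e, he⟩ := Finset.nonempty_of_ne_empty hempty
        simp only [Finset.mem_filter, Finset.mem_univ, true_and] at he
        obtain ⟨hre, hxe⟩ := he
        obtain ⟨x', hx'X, hx'le, hx'e, hx'w⟩ := hwdc x hxX e hxe
        -- objective does not decrease
        have hx'pos : ∀ i, 0 ≤ x' i := hXpos x' hx'X
        have hrsum : ∑ i, r i * x' i ≤ ∑ i, r i * x i - r e * x e := by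
          have : ∑ i, r i * x' i = ∑ i ∈ Finset.univ.erase e, r i * x' i := by
            rw [Finset.sum_erase_eq_sub (Finset.mem_univ e), hx'e, mul_zero, sub_zero]
          rw [this, ← Finset.sum_erase_eq_sub (Finset.mem_univ e)]
          exact Finset.sum_le_sum fun i _ => mul_le_mul_of_nonneg_left (hx'le i) (hr i)
        have hobj : l x ≤ l x' := by
          rw [hlval, hlval]
          have expand : ∀ u : Fin n → ℝ, ∑ i, (w i - r i) * u i
              = ∑ i, w i * u i - ∑ i, r i * u i := by
            intro u
            rw [← Finset.sum_sub_distrib]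
            congr 1; ext i; ring
          rw [expand, expand]
          have h1 : ∑ i, w i * x i - x e ≤ ∑ i, w i * x' i := hx'w
          have h2 : x e ≤ r e * x e := le_mul_of_one_le_left (le_of_lt hxe) hre
          linarith
        have hmax' : ∀ y ∈ P, l y ≤ l x' := fun y hy => (hmax y hy).trans hobj
        have hsub : (Finset.univ.filter (fun e' => 1 ≤ r e' ∧ 0 < x' e'))
            ⊆ (Finset.univ.filter (fun e' => 1 ≤ r e' ∧ 0 < x e')).erase e := by
          intro i hi
          simp only [Finset.mem_filter, Finset.mem_univ, true_and] at hi
          refine Finset.mem_erase.mpr ⟨?_, ?_⟩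
          · rintro rfl; exact absurd hx'e (ne_of_gt hi.2)
          · simp only [Finset.mem_filter, Finset.mem_univ, true_and]
            exact ⟨hi.1, hi.2.trans_le (hx'le i)⟩
        have hcard' : (Finset.univ.filter (fun e' => 1 ≤ r e' ∧ 0 < x' e')).card ≤ k := by
          have := Finset.card_le_card hsub
          have hcarde : ((Finset.univ.filter (fun e' => 1 ≤ r e' ∧ 0 < x e')).erase e).card
              = (Finset.univ.filter (fun e' => 1 ≤ r e' ∧ 0 < x e')).card - 1 := by
            apply Finset.card_erase_of_mem
            simp [hre, hxe]
          omega
        exact ih x' hx'X hcard' hmax'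
  obtain ⟨z', hz'P, hz'0, hz'max⟩ := key n z hzX (by
    calc (Finset.univ.filter (fun e => 1 ≤ r e ∧ 0 < z e)).card
        ≤ (Finset.univ : Finset (Fin n)).card := Finset.card_le_card (Finset.filter_subset _ _)
      _ = n := by simp) hzmax
  exact ⟨z', hz'P, hz'0, fun y hy => hz'max y hy⟩
end

section
/- Under the assumptions of the clipping lemma (vertices of the polytope P = conv(X) with X w-down-closed), define ψ(r) = max{(w − r)ᵀx : x ∈ P} for r ∈ ℝ_{≥0}^N. Then ψ(r) = ψ(r ∧ 1), where r ∧ 1 is the componentwise minimum of r and the all-ones vector. -/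
open Finset

private lemma lin_sum {n : ℕ} (c : Fin n → ℝ) :
    IsLinearMap ℝ (fun y : Fin n → ℝ => ∑ i, c i * y i) := by
  constructor
  · intro a b
    simp [mul_add, Finset.sum_add_distrib]
  · intro m a
    simp only [Pi.smul_apply, smul_eq_mul, Finset.mul_sum]
    exact Finset.sum_congr rfl fun i _ => by ring

private lemma bddX {n : ℕ} (X : Set (Fin n → ℝ)) (hXbdd : Bornology.IsBounded X)
    (c : Fin n → ℝ) : BddAbove {v : ℝ | ∃ x ∈ X, v = ∑ i, c i * x i} := by
  obtain ⟨C, hC⟩ := isBounded_iff_forall_norm_le.mp hXbdd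
  refine ⟨∑ i, |c i| * C, ?_⟩
  rintro v ⟨x, hx, rfl⟩
  refine Finset.sum_le_sum fun i _ => ?_
  have h1 : |x i| ≤ C := by
    have := norm_le_pi_norm x i
    have := hC x hx
    simp only [Real.norm_eq_abs] at *
    linarith
  calc c i * x i ≤ |c i * x i| := le_abs_self _
    _ = |c i| * |x i| := abs_mul _ _
    _ ≤ |c i| * C := by
        exact mul_le_mul_of_nonneg_left h1 (abs_nonneg _)

private lemma sup_hull_eq {n : ℕ} (X : Set (Fin n → ℝ)) (hXne : X.Nonempty)
    (hXbdd : Bornology.IsBounded X) (c : Fin n → ℝ) :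
    sSup {v : ℝ | ∃ x ∈ convexHull ℝ X, v = ∑ i, c i * x i} =
      sSup {v : ℝ | ∃ x ∈ X, v = ∑ i, c i * x i} := by
  obtain ⟨x0, hx0⟩ := hXne
  set M := sSup {v : ℝ | ∃ x ∈ X, v = ∑ i, c i * x i} with hM
  have hbX := bddX X hXbdd c
  have hsub : convexHull ℝ X ⊆ {y : Fin n → ℝ | ∑ i, c i * y i ≤ M} := by
    apply convexHull_min
    · intro x hx
      exact le_csSup hbX ⟨x, hx, rfl⟩
    · exact convex_halfSpace_le (lin_sum c) M
  have hbHull : BddAbove {v : ℝ | ∃ x ∈ convexHull ℝ X, v = ∑ i, c i * x i} := by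
    refine ⟨M, ?_⟩
    rintro v ⟨y, hy, rfl⟩
    exact hsub hy
  have hne1 : {v : ℝ | ∃ x ∈ convexHull ℝ X, v = ∑ i, c i * x i}.Nonempty :=
    ⟨_, x0, subset_convexHull ℝ X hx0, rfl⟩
  have hne2 : {v : ℝ | ∃ x ∈ X, v = ∑ i, c i * x i}.Nonempty := ⟨_, x0, hx0, rfl⟩
  apply le_antisymm
  · apply csSup_le hne1
    rintro v ⟨y, hy, rfl⟩
    exact hsub hy
  · apply csSup_le_csSup hbHull hne2
    rintro v ⟨x, hx, rfl⟩
    exact ⟨x, subset_convexHull ℝ X hx, rfl⟩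

private lemma clip {n : ℕ} (X : Set (Fin n → ℝ)) (hXpos : ∀ x ∈ X, ∀ i, 0 ≤ x i)
    (w : Fin n → ℝ)
    (hwdc : ∀ x ∈ X, ∀ e : Fin n, 0 < x e →
      ∃ x' ∈ X, (∀ i, x' i ≤ x i) ∧ x' e = 0 ∧
        ∑ i, w i * x' i ≥ ∑ i, w i * x i - x e)
    (S : Finset (Fin n)) :
    ∀ x ∈ X, ∃ x' ∈ X, (∀ i, x' i ≤ x i) ∧ (∀ e ∈ S, x' e = 0) ∧
      ∑ i, w i * x' i ≥ ∑ i, w i * x i - ∑ e ∈ S, x e := by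
  induction S using Finset.cons_induction with
  | empty =>
    intro x hx
    exact ⟨x, hx, fun i => le_refl _, by simp, by simp⟩
  | cons e S he ih =>
    intro x hx
    obtain ⟨x', hx', hle, hzero, hsum⟩ := ih x hx
    rcases eq_or_lt_of_le (hXpos x' hx' e) with h0 | hpos
    · refine ⟨x', hx', hle, ?_, ?_⟩
      · intro e' he'
        rcases Finset.mem_cons.mp he' with rfl | h
        · exact h0.symm
        · exact hzero _ h
      · rw [Finset.sum_cons]
        have := hXpos x hx e
        linarith
    · obtain ⟨x'', hx'', hle'', hz'', hsum''⟩ := hwdc x' hx' e hpos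
      refine ⟨x'', hx'', fun i => (hle'' i).trans (hle i), ?_, ?_⟩
      · intro e' he'
        rcases Finset.mem_cons.mp he' with rfl | h
        · exact hz''
        · have h1 := hle'' e'
          have h2 := hXpos x'' hx'' e'
          have h3 := hzero e' h
          linarith
      · rw [Finset.sum_cons]
        have := hle e
        linarith

/-- With `ψ(r) = max {(w-r)ᵀx : x ∈ P}` where `P = conv(X)` for a
`w`-down-closed set `X`, we have `ψ(r) = ψ(r ∧ 1)`. -/
theorem psi_eq_psi_min_one {n : ℕ}
    (X : Set (Fin n → ℝ)) (hXpos : ∀ x ∈ X, ∀ i, 0 ≤ x i)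
    (hXne : X.Nonempty) (hXbdd : Bornology.IsBounded X)
    (w : Fin n → ℝ) (hw : ∀ i, w i = 0 ∨ w i = 1)
    (hwdc : ∀ x ∈ X, ∀ e : Fin n, 0 < x e →
      ∃ x' ∈ X, (∀ i, x' i ≤ x i) ∧ x' e = 0 ∧
        ∑ i, w i * x' i ≥ ∑ i, w i * x i - x e)
    (hext : Set.extremePoints ℝ (convexHull ℝ X) ⊆ X)
    (r : Fin n → ℝ) (hr : ∀ i, 0 ≤ r i) :
    sSup {v : ℝ | ∃ x ∈ convexHull ℝ X, v = ∑ i, (w i - r i) * x i} =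
      sSup {v : ℝ | ∃ x ∈ convexHull ℝ X, v = ∑ i, (w i - min (r i) 1) * x i} := by
  obtain ⟨x0, hx0⟩ := hXne
  rw [sup_hull_eq X ⟨x0, hx0⟩ hXbdd (fun i => w i - r i),
      sup_hull_eq X ⟨x0, hx0⟩ hXbdd (fun i => w i - min (r i) 1)]
  have bddA := bddX X hXbdd (fun i => w i - r i)
  have bddB := bddX X hXbdd (fun i => w i - min (r i) 1)
  apply le_antisymm
  · have hne : {v : ℝ | ∃ x ∈ X, v = ∑ i, (w i - r i) * x i}.Nonempty := ⟨_, x0, hx0, rfl⟩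
    apply csSup_le hne
    rintro v ⟨x, hx, rfl⟩
    have hle : ∑ i, (w i - r i) * x i ≤ ∑ i, (w i - min (r i) 1) * x i := by
      refine Finset.sum_le_sum fun i _ => ?_
      have h1 : min (r i) 1 ≤ r i := min_le_left _ _
      have h2 := hXpos x hx i
      nlinarith
    exact hle.trans (le_csSup bddB ⟨x, hx, rfl⟩)
  · have hne : {v : ℝ | ∃ x ∈ X, v = ∑ i, (w i - min (r i) 1) * x i}.Nonempty :=
      ⟨_, x0, hx0, rfl⟩
    apply csSup_le hne
    rintro v ⟨x, hx, rfl⟩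
    set S : Finset (Fin n) := Finset.univ.filter (fun e => 1 < r e) with hS
    obtain ⟨x', hx', hle, hzero, hsum⟩ := clip X hXpos w hwdc S x hx
    have hmemS : ∀ i : Fin n, i ∈ S ↔ 1 < r i := by
      intro i; simp [hS]
    have key : ∑ i, (w i - min (r i) 1) * x i ≤ ∑ i, (w i - r i) * x' i := by
      have e1 : ∑ i, (w i - min (r i) 1) * x i
          = ∑ i, w i * x i - ∑ i, min (r i) 1 * x i := by
        rw [← Finset.sum_sub_distrib]
        exact Finset.sum_congr rfl fun i _ => by ring
      have e2 : ∑ i, (w i - r i) * x' i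
          = ∑ i, w i * x' i - ∑ i, r i * x' i := by
        rw [← Finset.sum_sub_distrib]
        exact Finset.sum_congr rfl fun i _ => by ring
      have s1 : ∑ i ∈ S, min (r i) 1 * x i + ∑ i ∈ Sᶜ, min (r i) 1 * x i
          = ∑ i, min (r i) 1 * x i := Finset.sum_add_sum_compl S _
      have s2 : ∑ i ∈ S, r i * x' i + ∑ i ∈ Sᶜ, r i * x' i
          = ∑ i, r i * x' i := Finset.sum_add_sum_compl S _
      have h2 : ∑ i ∈ S, r i * x' i = 0 :=
        Finset.sum_eq_zero fun i hi => by rw [hzero i hi, mul_zero]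
      have h3 : ∑ i ∈ Sᶜ, r i * x' i ≤ ∑ i ∈ Sᶜ, r i * x i :=
        Finset.sum_le_sum fun i _ => mul_le_mul_of_nonneg_left (hle i) (hr i)
      have h4 : ∑ i ∈ S, min (r i) 1 * x i = ∑ i ∈ S, x i := by
        refine Finset.sum_congr rfl fun i hi => ?_
        rw [min_eq_right ((hmemS i).mp hi).le, one_mul]
      have h5 : ∑ i ∈ Sᶜ, min (r i) 1 * x i = ∑ i ∈ Sᶜ, r i * x i := by
        refine Finset.sum_congr rfl fun i hi => ?_
        have : ¬ (1 < r i) := fun h => (Finset.mem_compl.mp hi) ((hmemS i).mpr h)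
        rw [min_eq_left (not_lt.mp this)]
      linarith
    exact key.trans (le_csSup bddA ⟨x', hx', rfl⟩)
end

section
/- Under the assumptions of the clipping lemma, for every R ⊆ N: max{wᵀx : x ∈ P, x(e) = 0 ∀e ∈ R} = max{(w − χ^R)ᵀx : x ∈ P}. That is, interdicting the set R is equivalent to subtracting its characteristic vector from the objective. -/
/-!
Clipping the coordinates in `R` one at a time, `w`-down-closedness turns any point of `X` into
a point of `X` vanishing on `R` whose `w`-value is at least the shifted objective of the
original point. Since a linear functional attains its maximum over `conv X` on `X`, every value
of the shifted objective on `P` is dominated by an interdicted value, and conversely the two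
objectives agree on points vanishing on `R`. Hence the two sets of values have the same upper
bounds, and so the same supremum.
-/

open Finset

variable {ι : Type*} [Fintype ι]

def IsWeightDownClosed (w : ι → ℝ) (X : Set (ι → ℝ)) : Prop :=
  ∀ x ∈ X, ∀ e : ι, 0 < x e → ∃ x' ∈ X, x' ≤ x ∧ x' e = 0 ∧ w ⬝ᵥ x - x e ≤ w ⬝ᵥ x'

theorem IsWeightDownClosed.exists_clip {w : ι → ℝ} {X : Set (ι → ℝ)}
    (hpos : ∀ x ∈ X, 0 ≤ x) (hX : IsWeightDownClosed w X) (S : Finset ι) {x : ι → ℝ}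
    (hx : x ∈ X) :
    ∃ y ∈ X, y ≤ x ∧ (∀ e ∈ S, y e = 0) ∧ w ⬝ᵥ x - ∑ e ∈ S, x e ≤ w ⬝ᵥ y := by
  classical
  induction S using Finset.induction_on with
  | empty => exact ⟨x, hx, le_rfl, by simp, by simp⟩
  | @insert a S haS ih =>
    obtain ⟨y, hyX, hyx, hyS, hy⟩ := ih
    rw [sum_insert haS]
    have hxa : 0 ≤ x a := hpos x hx a
    rcases (hpos y hyX a).eq_or_lt with hya | hya
    · refine ⟨y, hyX, hyx, ?_, by linarith⟩
      simpa only [forall_mem_insert] using ⟨hya.symm, hyS⟩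
    · obtain ⟨y', hy'X, hy'y, hy'a, hy'⟩ := hX y hyX a hya
      refine ⟨y', hy'X, hy'y.trans hyx, ?_, by linarith [hyx a]⟩
      refine forall_mem_insert _ _ _ |>.mpr ⟨hy'a, fun e he => ?_⟩
      exact le_antisymm ((hy'y e).trans_eq (hyS e he)) (hpos y' hy'X e)

theorem exists_dotProduct_le_of_mem_convexHull (c : ι → ℝ) {X : Set (ι → ℝ)} {x : ι → ℝ}
    (hx : x ∈ convexHull ℝ X) : ∃ t ∈ X, c ⬝ᵥ x ≤ c ⬝ᵥ t :=
  ((dotProductBilin ℝ ℝ c).convexOn convex_univ).exists_ge_of_mem_convexHull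
    (Set.subset_univ X) hx

theorem sum_sub_ite_mem_mul (w x : ι → ℝ) (R : Finset ι) [DecidablePred (· ∈ R)] :
    ∑ i, (w i - if i ∈ R then (1 : ℝ) else 0) * x i = w ⬝ᵥ x - ∑ e ∈ R, x e := by
  simp only [sub_mul, ite_mul, one_mul, zero_mul, sum_sub_distrib, sum_ite_mem_eq]
  rfl

theorem interdiction_eq_objective_shift_general {n : ℕ}
    (X : Set (Fin n → ℝ)) (hXpos : ∀ x ∈ X, ∀ i, 0 ≤ x i)
    (w : Fin n → ℝ)
    (hwdc : ∀ x ∈ X, ∀ e : Fin n, 0 < x e →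
      ∃ x' ∈ X, (∀ i, x' i ≤ x i) ∧ x' e = 0 ∧
        ∑ i, w i * x' i ≥ ∑ i, w i * x i - x e)
    (R : Finset (Fin n)) :
    sSup {v : ℝ | ∃ x ∈ convexHull ℝ X, (∀ e ∈ R, x e = 0) ∧ v = ∑ i, w i * x i} =
      sSup {v : ℝ | ∃ x ∈ convexHull ℝ X,
        v = ∑ i, (w i - if i ∈ R then (1 : ℝ) else 0) * x i} := by
  refine csSup_eq_csSup_of_forall_exists_le ?_ ?_
  · rintro _ ⟨x, hx, hxR, rfl⟩
    refine ⟨_, ⟨x, hx, rfl⟩, ?_⟩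
    rw [sum_sub_ite_mem_mul, sum_eq_zero hxR, sub_zero]
    rfl
  · rintro _ ⟨x, hx, rfl⟩
    obtain ⟨t, ht, hxt⟩ := exists_dotProduct_le_of_mem_convexHull _ hx
    obtain ⟨y, hy, -, hyR, hty⟩ := IsWeightDownClosed.exists_clip hXpos hwdc R ht
    refine ⟨_, ⟨y, subset_convexHull ℝ X hy, hyR, rfl⟩, ?_⟩
    calc _ ≤ _ := hxt
      _ = w ⬝ᵥ t - ∑ e ∈ R, t e := sum_sub_ite_mem_mul w t R
      _ ≤ _ := hty

/-- Interdicting the set `R` is equivalent to subtracting its characteristic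
vector from the objective: `max {wᵀx : x ∈ P, x(e)=0 ∀e∈R} =
max {(w - χ^R)ᵀx : x ∈ P}` for `P = conv(X)`, `X` `w`-down-closed. -/
theorem interdiction_eq_objective_shift {n : ℕ}
    (X : Set (Fin n → ℝ)) (hXpos : ∀ x ∈ X, ∀ i, 0 ≤ x i)
    (hXne : X.Nonempty) (hXbdd : Bornology.IsBounded X)
    (w : Fin n → ℝ) (hw : ∀ i, w i = 0 ∨ w i = 1)
    (hwdc : ∀ x ∈ X, ∀ e : Fin n, 0 < x e →
      ∃ x' ∈ X, (∀ i, x' i ≤ x i) ∧ x' e = 0 ∧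
        ∑ i, w i * x' i ≥ ∑ i, w i * x i - x e)
    (hext : Set.extremePoints ℝ (convexHull ℝ X) ⊆ X)
    (R : Finset (Fin n)) :
    sSup {v : ℝ | ∃ x ∈ convexHull ℝ X, (∀ e ∈ R, x e = 0) ∧ v = ∑ i, w i * x i} =
      sSup {v : ℝ | ∃ x ∈ convexHull ℝ X,
        v = ∑ i, (w i - if i ∈ R then (1 : ℝ) else 0) * x i} :=
  interdiction_eq_objective_shift_general X hXpos w hwdc R
end

section
/- Let λ* ≥ 0, and let (r¹, y¹) and (r², y²) be two optimal solutions of the Lagrangian LP min{bᵀy − λ*(B − cᵀr) : Aᵀy + r ≥ w, y ≥ 0, r ≥ 0} with cᵀr¹ ≥ B ≥ cᵀr². Let L(λ*) be the common optimal value and α > 0. Then at least one of the following holds: (i) cᵀr¹ ≤ (1 + 1/α)B, or (ii) bᵀy² ≤ (1 + α)L(λ*). -/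
open Finset Matrix

/-- For two optimal solutions `(r¹,y¹)`, `(r²,y²)` of the Lagrangian LP at an
optimal multiplier `λ*`, with `cᵀr¹ ≥ B ≥ cᵀr²`, and any `α > 0`, either
`cᵀr¹ ≤ (1 + 1/α)B` or `bᵀy² ≤ (1 + α)L(λ*)`. -/
theorem lagrangian_dichotomy {m n : ℕ} (A : Matrix (Fin m) (Fin n) ℝ)
    (b : Fin m → ℝ) (hb : ∀ j, 0 ≤ b j)
    (w : Fin n → ℝ) (hw : ∀ i, w i = 0 ∨ w i = 1)
    (c : Fin n → ℝ) (hc : ∀ i, 0 < c i)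
    (B : ℝ) (hB : 0 < B) (lam : ℝ) (hlam : 0 ≤ lam)
    (L : ℝ)
    (r1 r2 : Fin n → ℝ) (y1 y2 : Fin m → ℝ)
    (hfeas1 : (∀ i, w i ≤ Aᵀ.mulVec y1 i + r1 i) ∧ (∀ j, 0 ≤ y1 j) ∧ ∀ i, 0 ≤ r1 i)
    (hfeas2 : (∀ i, w i ≤ Aᵀ.mulVec y2 i + r2 i) ∧ (∀ j, 0 ≤ y2 j) ∧ ∀ i, 0 ≤ r2 i)
    (hopt1 : ∑ j, b j * y1 j - lam * (B - ∑ i, c i * r1 i) = L)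
    (hopt2 : ∑ j, b j * y2 j - lam * (B - ∑ i, c i * r2 i) = L)
    (hoptL : ∀ y : Fin m → ℝ, ∀ r : Fin n → ℝ,
      (∀ i, w i ≤ Aᵀ.mulVec y i + r i) → (∀ j, 0 ≤ y j) → (∀ i, 0 ≤ r i) →
      L ≤ ∑ j, b j * y j - lam * (B - ∑ i, c i * r i))
    (hbudget : ∑ i, c i * r2 i ≤ B) (hbudget' : B ≤ ∑ i, c i * r1 i)
    (α : ℝ) (hα : 0 < α) :
    (∑ i, c i * r1 i ≤ (1 + 1 / α) * B) ∨
      (∑ j, b j * y2 j ≤ (1 + α) * L) := by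
  by_cases h : ∑ i, c i * r1 i ≤ (1 + 1 / α) * B
  · exact Or.inl h
  · right
    push_neg at h
    have hy1 : 0 ≤ ∑ j, b j * y1 j :=
      Finset.sum_nonneg fun j _ => mul_nonneg (hb j) (hfeas1.2.1 j)
    have hr2 : 0 ≤ ∑ i, c i * r2 i :=
      Finset.sum_nonneg fun i _ => mul_nonneg (hc i).le (hfeas2.2.2 i)
    -- λ(cᵀr1 - B) ≤ L
    have h1 : lam * (∑ i, c i * r1 i - B) ≤ L := by nlinarith [hopt1]
    -- cᵀr1 - B ≥ B/α
    have h2 : B / α ≤ ∑ i, c i * r1 i - B := by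
      rw [div_le_iff₀ hα]
      have := mul_lt_mul_of_pos_right h hα
      have hα' : α ≠ 0 := hα.ne'
      field_simp at this
      nlinarith
    have h3 : lam * B ≤ α * L := by
      have h5 : lam * B / α ≤ L := by
        rw [mul_div_assoc]
        exact le_trans (mul_le_mul_of_nonneg_left h2 hlam) h1
      rw [div_le_iff₀ hα] at h5
      linarith
    have h4 : lam * (B - ∑ i, c i * r2 i) ≤ lam * B :=
      mul_le_mul_of_nonneg_left (by linarith) hlam
    nlinarith [hopt2]
end

section
/- Let M = (N, I) be a matroid with weighted rank function r_w(S) = max{w(I) : I ⊆ S, I ∈ I}, and let P_w = {x ∈ ℝ_{≥0}^N : x(S) ≤ r_w(S) ∀S ⊆ N}. Then for every R ⊆ N: max{x(N) : x ∈ P_w, x(e) = 0 ∀e ∈ R} = max{w(I) : I ∈ I, I ⊆ N \ R}. -/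
open Finset

/-- Interdicting the maximum weight independent set of a matroid corresponds to
interdicting the all-ones maximization over the polymatroid `P_w` of the
weighted rank function: for every `R ⊆ N`,
`max {x(N) : x ∈ P_w, x(R) = 0} = max {w(I) : I ∈ 𝓘, I ⊆ N \ R} = r_w(N \ R)`. -/
theorem polymatroid_interdiction_eq {n : ℕ} (Indep : Set (Finset (Fin n)))
    (hne : Indep.Nonempty)
    (hdown : ∀ I ∈ Indep, ∀ J ⊆ I, J ∈ Indep)
    (hexch : ∀ I ∈ Indep, ∀ J ∈ Indep, I.card < J.card →
      ∃ e ∈ J \ I, insert e I ∈ Indep)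
    (w : Fin n → ℤ) (hw : ∀ i, 0 ≤ w i)
    (rw : Finset (Fin n) → ℝ)
    (hrw : ∀ S : Finset (Fin n),
      IsGreatest {v : ℝ | ∃ I ∈ Indep, I ⊆ S ∧ v = ∑ i ∈ I, (w i : ℝ)} (rw S))
    (R : Finset (Fin n)) :
    sSup {v : ℝ | ∃ x : Fin n → ℝ, (∀ i, 0 ≤ x i) ∧
        (∀ S : Finset (Fin n), ∑ i ∈ S, x i ≤ rw S) ∧
        (∀ e ∈ R, x e = 0) ∧ v = ∑ i, x i} =
      rw Rᶜ := by
  apply IsGreatest.csSup_eq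
  constructor
  · -- rw Rᶜ is in the set
    obtain ⟨I, hI, hIsub, hIval⟩ := (hrw Rᶜ).1
    refine ⟨fun i => if i ∈ I then (w i : ℝ) else 0, ?_, ?_, ?_, ?_⟩
    · intro i
      dsimp only
      split
      · exact_mod_cast hw i
      · exact le_refl 0
    · intro S
      dsimp only
      have h1 : ∑ i ∈ S, (if i ∈ I then (w i : ℝ) else 0) = ∑ i ∈ S ∩ I, (w i : ℝ) := by
        rw [Finset.sum_ite_mem]
      rw [h1]
      exact (hrw S).2 ⟨S ∩ I, hdown I hI _ (Finset.inter_subset_right), Finset.inter_subset_left, rfl⟩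
    · intro e he
      have : e ∉ I := fun h => by have := hIsub h; simp_all
      simp [this]
    · dsimp only
      rw [hIval]
      rw [Finset.sum_ite_mem, Finset.univ_inter]
  · -- upper bound
    rintro v ⟨x, hx0, hxS, hxR, rfl⟩
    have : ∑ i, x i = ∑ i ∈ Rᶜ, x i := by
      rw [← Finset.sum_add_sum_compl R]
      rw [Finset.sum_eq_zero hxR, zero_add]
    rw [this]
    exact hxS Rᶜ
end

section
/- Let G = (V, E) be bipartite with interdiction costs c : V → ℤ_{>0} and budget B. Order V = {v₁,…,vₙ} with c(v₁) ≤ … ≤ c(vₙ), and set V_ℓ = {v₁,…,v_ℓ}. If R is an optimal interdiction set (minimizing α(G[V \ R]) subject to c(R) ≤ B) and M* is a maximum matching in G[V \ R], then R* = V_ℓ \ V(M*), where ℓ is the largest index with c(V_ℓ \ V(M*)) ≤ B, is also an optimal interdiction set. -/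
/-!
By König's theorem, a maximum matching `M` of the bipartite graph `G - R` satisfies
`α(G - R) = |V| - |R| - |M|`. In any graph, a matching `M` of `G - R'` gives
`α(G - R') ≤ |V| - |R'| - |M|`, since every edge of `M` has an endpoint outside a stable set;
`R* = V_ℓ \ V(M)` avoids `V(M)`, so this applies to `R' = R*`. It remains to see `|R| ≤ |R*|`.
Both sets avoid `V(M)` and `R*` consists of the cheapest vertices outside `V(M)`; if `R*` had
fewer than `|R|` of them, then `V_{ℓ+1} \ V(M)` would have at most `|R|` vertices, each cheaper
than the vertices of `R` it misses, so it would cost at most `c(R) ≤ B`, against the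
maximality of `ℓ`. König's theorem is obtained from the deficiency version of Hall's theorem.
-/
open Finset

/-- `M` is a matching of `G` avoiding the vertex set `R`. -/
def IsMatchingAvoiding {V : Type*} (G : SimpleGraph V) (R : Finset V)
    (M : Finset (V × V)) : Prop :=
  (∀ p ∈ M, G.Adj p.1 p.2 ∧ p.1 ∉ R ∧ p.2 ∉ R) ∧
    ∀ p ∈ M, ∀ q ∈ M, p ≠ q →
      p.1 ≠ q.1 ∧ p.1 ≠ q.2 ∧ p.2 ≠ q.1 ∧ p.2 ≠ q.2

/-- `S` is a stable set of `G` avoiding the vertex set `R`. -/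
def IsStableAvoiding {V : Type*} (G : SimpleGraph V) (R : Finset V)
    (S : Finset V) : Prop :=
  (∀ v ∈ S, v ∉ R) ∧ ∀ u ∈ S, ∀ v ∈ S, ¬G.Adj u v

/-- The set of endpoints of the edges of `M`. -/
def matchEnds {V : Type*} [DecidableEq V] (M : Finset (V × V)) : Finset V :=
  M.image Prod.fst ∪ M.image Prod.snd

/-- The `ℓ` cheapest vertices (vertices are ordered by nondecreasing cost). -/
def cheapest (n ℓ : ℕ) : Finset (Fin n) :=
  Finset.univ.filter (fun v => (v : ℕ) < ℓ)

theorem Finset.sum_le_sum_of_card_le_of_forall_le {ι M : Type*} [AddCommMonoid M] [LinearOrder M]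
    [IsOrderedAddMonoid M] [DecidableEq ι] {f : ι → M} {S T : Finset ι} (hcard : #S ≤ #T)
    (hle : ∀ x ∈ S \ T, ∀ y ∈ T \ S, f x ≤ f y) (hT : ∀ y ∈ T, 0 ≤ f y) :
    ∑ x ∈ S, f x ≤ ∑ y ∈ T, f y := by
  rcases (S \ T).eq_empty_or_nonempty with hST | hST
  · exact sum_le_sum_of_subset_of_nonneg (sdiff_eq_empty_iff_subset.1 hST) fun y hy _ => hT y hy
  obtain ⟨x₀, hx₀, hmax⟩ := exists_max_image (S \ T) f hST
  have hcard' : #(S \ T) ≤ #(T \ S) := by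
    have := card_sdiff_add_card_inter S T
    have := card_sdiff_add_card_inter T S
    rw [inter_comm] at this
    omega
  obtain ⟨T', hT'sub, hT'card⟩ := exists_subset_card_eq hcard'
  have hT'le : ∑ y ∈ T', f y ≤ ∑ y ∈ T \ S, f y :=
    sum_le_sum_of_subset_of_nonneg hT'sub fun y hy _ => hT y (mem_sdiff.1 hy).1
  calc ∑ x ∈ S, f x = ∑ x ∈ S ∩ T, f x + ∑ x ∈ S \ T, f x := (sum_inter_add_sum_sdiff S T f).symm
    _ ≤ ∑ x ∈ S ∩ T, f x + #T' • f x₀ := by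
        rw [hT'card]; gcongr; exact sum_le_card_nsmul _ _ _ hmax
    _ ≤ ∑ x ∈ S ∩ T, f x + ∑ y ∈ T \ S, f y := by
        gcongr
        exact (card_nsmul_le_sum _ _ _ fun y hy => hle x₀ hx₀ y (hT'sub hy)).trans hT'le
    _ = ∑ y ∈ T, f y := by rw [inter_comm, sum_inter_add_sum_sdiff]

theorem Finset.card_le_card_biUnion_disjSum {ι α : Type*} [DecidableEq α] {A : Finset ι}
    {t : ι → Finset α} {d : ℕ} (h : ∀ X ⊆ A, #X ≤ #(X.biUnion t) + d) (s : Finset A) :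
    #s ≤ #(s.biUnion fun i => (t i).disjSum (univ : Finset (Fin d))) := by
  rcases s.eq_empty_or_nonempty with rfl | ⟨i, hi⟩
  · simp
  let X := s.map (Function.Embedding.subtype _)
  have hsub : (X.biUnion t).disjSum (univ : Finset (Fin d)) ⊆
      s.biUnion fun i => (t i).disjSum univ := by
    rintro (a | j) hx
    · obtain ⟨_, hk, ha⟩ := mem_biUnion.1 (inl_mem_disjSum.1 hx)
      obtain ⟨k, hks, rfl⟩ := mem_map.1 hk
      exact mem_biUnion.2 ⟨k, hks, inl_mem_disjSum.2 ha⟩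
    · exact mem_biUnion.2 ⟨i, hi, inr_mem_disjSum.2 (mem_univ j)⟩
  calc #s = #X := (card_map _).symm
    _ ≤ #(X.biUnion t) + d := h _ fun _ hx => by obtain ⟨k, -, rfl⟩ := mem_map.1 hx; exact k.2
    _ ≤ _ := by simpa using card_le_card hsub

theorem Finset.exists_partial_transversal {ι α : Type*} [DecidableEq α]
    (A : Finset ι) (t : ι → Finset α) (d : ℕ) (h : ∀ X ⊆ A, #X ≤ #(X.biUnion t) + d) :
    ∃ P : Finset (ι × α), #A ≤ #P + d ∧ (∀ p ∈ P, p.1 ∈ A ∧ p.2 ∈ t p.1) ∧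
      Set.InjOn Prod.fst (P : Set (ι × α)) ∧ Set.InjOn Prod.snd (P : Set (ι × α)) := by
  classical
  -- Hall's theorem, after adding `d` new elements that every index may use
  obtain ⟨f, hf, hft⟩ := (all_card_le_biUnion_card_iff_exists_injective _).1
    (card_le_card_biUnion_disjSum h)
  let P := (A ×ˢ A.biUnion t).filter fun p => ∃ h : p.1 ∈ A, f ⟨p.1, h⟩ = .inl p.2
  have hP : ∀ p ∈ P, ∃ h : p.1 ∈ A, f ⟨p.1, h⟩ = .inl p.2 := fun p hp => (mem_filter.1 hp).2
  have hPt : ∀ p ∈ P, p.1 ∈ A ∧ p.2 ∈ t p.1 := by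
    intro p hp
    obtain ⟨h, hfp⟩ := hP p hp
    exact ⟨h, inl_mem_disjSum.1 (hfp ▸ hft ⟨p.1, h⟩)⟩
  have hcover : univ.image f ⊆ (P.image Prod.snd).disjSum univ := by
    intro x hx
    obtain ⟨i, -, rfl⟩ := mem_image.1 hx
    rcases hfi : f i with a | j
    · have hai : a ∈ t i := inl_mem_disjSum.1 (hfi ▸ hft i)
      refine inl_mem_disjSum.2 (mem_image.2 ⟨(i.1, a), mem_filter.2 ⟨?_, i.2, hfi⟩, rfl⟩)
      exact mem_product.2 ⟨i.2, mem_biUnion.2 ⟨i, i.2, hai⟩⟩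
    · exact inr_mem_disjSum.2 (mem_univ j)
  refine ⟨P, ?_, hPt, ?_, ?_⟩
  · calc #A = #(univ.image f) := by rw [card_image_of_injective _ hf, card_univ, Fintype.card_coe]
      _ ≤ #(P.image Prod.snd) + d := by simpa using card_le_card hcover
      _ ≤ #P + d := by gcongr; exact card_image_le
  · rintro ⟨a, b⟩ hp ⟨a', b'⟩ hq (rfl : a = a')
    obtain ⟨_, hfp⟩ := hP _ hp
    obtain ⟨_, hfq⟩ := hP _ hq
    simpa using Sum.inl.inj (hfp.symm.trans hfq)
  · rintro ⟨a, b⟩ hp ⟨a', b'⟩ hq (rfl : b = b')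
    obtain ⟨_, hfp⟩ := hP _ hp
    obtain ⟨_, hfq⟩ := hP _ hq
    simpa using congrArg Subtype.val (hf (hfp.trans hfq.symm))

section Graph

variable {V : Type*} {G : SimpleGraph V} {col : V → Bool} {R : Finset V}

theorem IsMatchingAvoiding.disjoint_matchEnds [DecidableEq V] {M : Finset (V × V)}
    (hM : IsMatchingAvoiding G R M) : Disjoint R (matchEnds M) := by
  rw [disjoint_right]
  simp only [matchEnds, mem_union, mem_image]
  rintro v (⟨p, hp, rfl⟩ | ⟨p, hp, rfl⟩)
  exacts [(hM.1 p hp).2.1, (hM.1 p hp).2.2]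

theorem IsMatchingAvoiding.of_disjoint_matchEnds [DecidableEq V] {R' : Finset V}
    {M : Finset (V × V)} (hM : IsMatchingAvoiding G R M) (hR' : Disjoint R' (matchEnds M)) :
    IsMatchingAvoiding G R' M := by
  refine ⟨fun p hp => ⟨(hM.1 p hp).1, fun h => ?_, fun h => ?_⟩, hM.2⟩
  · exact disjoint_left.1 hR' h (mem_union_left _ (mem_image_of_mem _ hp))
  · exact disjoint_left.1 hR' h (mem_union_right _ (mem_image_of_mem _ hp))

theorem IsStableAvoiding.card_add_card_add_card_le [Fintype V] {S : Finset V}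
    {M : Finset (V × V)} (hS : IsStableAvoiding G R S) (hM : IsMatchingAvoiding G R M) :
    #S + #M + #R ≤ Fintype.card V := by
  classical
  -- every edge of `M` has an endpoint outside the stable set `S`
  let T := M.image fun p => if p.1 ∈ S then p.2 else p.1
  have hTcard : #T = #M := by
    refine card_image_of_injOn fun p hp q hq h => ?_
    by_contra hpq
    obtain ⟨h1, h2, h3, h4⟩ := hM.2 p hp q hq hpq
    split_ifs at h <;> tauto
  have hTS : Disjoint S T := by
    simp only [T, disjoint_right, mem_image]
    rintro _ ⟨p, hp, rfl⟩
    split_ifs with h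
    · exact fun h2 => hS.2 _ h _ h2 (hM.1 p hp).1
    · exact h
  have hTR : Disjoint (S ∪ T) R := by
    simp only [T, disjoint_left, mem_union, mem_image]
    rintro _ (hv | ⟨p, hp, rfl⟩)
    · exact hS.1 _ hv
    · split_ifs
      exacts [(hM.1 p hp).2.2, (hM.1 p hp).2.1]
  calc #S + #M + #R = #(S ∪ T ∪ R) := by
        rw [card_union_of_disjoint hTR, card_union_of_disjoint hTS, hTcard]
    _ ≤ Fintype.card V := card_le_univ _

theorem isMatchingAvoiding_of_injOn (hbip : ∀ u v, G.Adj u v → col u ≠ col v)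
    {P : Finset (V × V)} (hP : ∀ p ∈ P, G.Adj p.1 p.2 ∧ col p.1 = true ∧ p.1 ∉ R ∧ p.2 ∉ R)
    (hfst : Set.InjOn Prod.fst (P : Set (V × V))) (hsnd : Set.InjOn Prod.snd (P : Set (V × V))) :
    IsMatchingAvoiding G R P := by
  have hcross : ∀ p ∈ P, ∀ q ∈ P, p.1 ≠ q.2 := fun p hp q hq h =>
    hbip _ _ (hP q hq).1 (by rw [(hP q hq).2.1, ← h, (hP p hp).2.1])
  exact ⟨fun p hp => ⟨(hP p hp).1, (hP p hp).2.2⟩, fun p hp q hq hpq =>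
    ⟨fun h => hpq (hfst hp hq h), hcross p hp q hq, (hcross q hq p hp).symm,
      fun h => hpq (hsnd hp hq h)⟩⟩

theorem isStableAvoiding_union_sdiff_biUnion [DecidableEq V] [DecidableRel G.Adj]
    (hbip : ∀ u v, G.Adj u v → col u ≠ col v) {X Y : Finset V}
    (hX : ∀ v ∈ X, col v = true ∧ v ∉ R) (hY : ∀ v ∈ Y, col v = false ∧ v ∉ R) :
    IsStableAvoiding G R (X ∪ (Y \ X.biUnion fun x => Y.filter (G.Adj x))) := by
  have hcol : ∀ v ∈ X ∪ (Y \ X.biUnion fun x => Y.filter (G.Adj x)), col v = decide (v ∈ X) := by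
    intro v hv
    rcases mem_union.1 hv with hv | hv
    · simp [hv, (hX v hv).1]
    · have hvY := (hY v (mem_sdiff.1 hv).1).1
      simpa [hvY] using fun hvX => by simp [(hX v hvX).1] at hvY
  refine ⟨fun v hv => ?_, fun u hu v hv huv => ?_⟩
  · rcases mem_union.1 hv with hv | hv
    exacts [(hX v hv).2, (hY v (mem_sdiff.1 hv).1).2]
  have hN : ∀ x ∈ X, ∀ y ∈ Y \ X.biUnion fun x => Y.filter (G.Adj x), ¬G.Adj x y :=
    fun x hx y hy hxy =>
      (mem_sdiff.1 hy).2 (mem_biUnion.2 ⟨x, hx, mem_filter.2 ⟨(mem_sdiff.1 hy).1, hxy⟩⟩)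
  by_cases hux : u ∈ X <;> by_cases hvx : v ∈ X
  · exact hbip u v huv (by rw [hcol u hu, hcol v hv]; simp [hux, hvx])
  · exact hN u hux v ((mem_union.1 hv).resolve_left hvx) huv
  · exact hN v hvx u ((mem_union.1 hu).resolve_left hux) huv.symm
  · exact hbip u v huv (by rw [hcol u hu, hcol v hv]; simp [hux, hvx])

theorem exists_isStableAvoiding_card_add_card_add_card_ge [Fintype V]
    (hbip : ∀ u v, G.Adj u v → col u ≠ col v) (M : Finset (V × V))
    (hMmax : ∀ M', IsMatchingAvoiding G R M' → #M' ≤ #M) :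
    ∃ S, IsStableAvoiding G R S ∧ Fintype.card V ≤ #S + #M + #R := by
  classical
  let A := Rᶜ.filter fun v => col v
  let B := Rᶜ.filter fun v => ¬col v
  let N : V → Finset V := fun a => B.filter (G.Adj a)
  have hA : ∀ v ∈ A, col v = true ∧ v ∉ R := fun v hv => by simp_all [A]
  have hB : ∀ v ∈ B, col v = false ∧ v ∉ R := fun v hv => by simp_all [B]
  have hAB : #A + #B + #R = Fintype.card V := by
    rw [card_filter_add_card_filter_not, add_comm, card_add_card_compl]
  have hNB : ∀ Y : Finset V, Y.biUnion N ⊆ B :=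
    fun _ => biUnion_subset.2 fun _ _ => filter_subset _ _
  -- `X ∪ (B \ N(X))` is stable for `X ⊆ A`, of size `#B` plus the deficiency `#X - #N(X)`
  obtain ⟨X, hXA, hXmax⟩ := exists_max_image A.powerset (fun X => #X + #B - #(X.biUnion N))
    ⟨∅, empty_mem_powerset A⟩
  rw [mem_powerset] at hXA
  have hX₀ := hXmax ∅ (empty_mem_powerset A)
  have hNXB := card_le_card (hNB X)
  simp only [card_empty, biUnion_empty, zero_add, tsub_zero] at hX₀
  obtain ⟨P, hPcard, hPmem, hfst, hsnd⟩ :=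
    exists_partial_transversal A N (#X - #(X.biUnion N)) fun Y hY => by
      have := hXmax Y (mem_powerset.2 hY)
      have := card_le_card (hNB Y)
      omega
  have hPM : #P ≤ #M := by
    refine hMmax P (isMatchingAvoiding_of_injOn hbip (fun p hp => ?_) hfst hsnd)
    obtain ⟨h1, h2⟩ := hPmem p hp
    exact ⟨(mem_filter.1 h2).2, (hA _ h1).1, (hA _ h1).2, (hB _ (mem_filter.1 h2).1).2⟩
  have hXB : Disjoint X (B \ X.biUnion N) :=
    (disjoint_filter_filter_not _ _ _).mono hXA sdiff_subset
  refine ⟨_, isStableAvoiding_union_sdiff_biUnion hbip (fun v hv => hA v (hXA hv)) hB, ?_⟩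
  rw [card_union_of_disjoint hXB, card_sdiff_of_subset (hNB X)]
  omega

end Graph

section Cheapest

variable {n ℓ : ℕ}

theorem mem_cheapest {v : Fin n} : v ∈ cheapest n ℓ ↔ (v : ℕ) < ℓ := by
  simp [cheapest]

theorem cheapest_eq_univ (h : n ≤ ℓ) : cheapest n ℓ = univ :=
  eq_univ_of_forall fun v => mem_cheapest.2 (v.2.trans_le h)

theorem cheapest_succ (h : ℓ < n) : cheapest n (ℓ + 1) = insert ⟨ℓ, h⟩ (cheapest n ℓ) := by
  ext v
  simp only [mem_cheapest, mem_insert, Fin.ext_iff]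
  omega

theorem card_le_card_cheapest_sdiff (c : Fin n → ℤ) (hc : ∀ v, 0 ≤ c v) (hcmono : Monotone c)
    (B : ℤ) (W R : Finset (Fin n)) (hRW : Disjoint R W) (hRB : ∑ v ∈ R, c v ≤ B)
    (hℓmax : ∀ ℓ' ≤ n, ∑ v ∈ cheapest n ℓ' \ W, c v ≤ B → ℓ' ≤ ℓ) :
    #R ≤ #(cheapest n ℓ \ W) := by
  by_contra! hlt
  have hRsub : R ⊆ univ \ W := fun v hv => mem_sdiff.2 ⟨mem_univ v, disjoint_left.1 hRW hv⟩
  have hℓn : ℓ < n := by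
    by_contra! h
    rw [cheapest_eq_univ h] at hlt
    exact hlt.not_ge (card_le_card hRsub)
  have hcard : #(cheapest n (ℓ + 1) \ W) ≤ #R := by
    rw [cheapest_succ hℓn]
    refine (card_le_card fun v => ?_).trans ((card_insert_le ⟨ℓ, hℓn⟩ _).trans hlt)
    simp only [mem_sdiff, mem_insert]
    tauto
  have hsum : ∑ v ∈ cheapest n (ℓ + 1) \ W, c v ≤ ∑ v ∈ R, c v := by
    refine sum_le_sum_of_card_le_of_forall_le hcard (fun x hx y hy => hcmono ?_) fun v _ => hc v
    have hx := mem_cheapest.1 (mem_sdiff.1 (mem_sdiff.1 hx).1).1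
    have hyW := (mem_sdiff.1 (hRsub (mem_sdiff.1 hy).1)).2
    have hy : ¬(y : ℕ) < ℓ + 1 := fun h => (mem_sdiff.1 hy).2 (mem_sdiff.2 ⟨mem_cheapest.2 h, hyW⟩)
    exact Fin.le_iff_val_le_val.2 (by omega)
  exact (hℓmax (ℓ + 1) hℓn (hsum.trans hRB)).not_gt (Nat.lt_succ_self ℓ)

end Cheapest

theorem optimal_interdiction_from_matching_general {n : ℕ} (G : SimpleGraph (Fin n))
    (col : Fin n → Bool) (hbip : ∀ u v : Fin n, G.Adj u v → col u ≠ col v)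
    (c : Fin n → ℤ) (hcpos : ∀ v, 0 < c v) (hcmono : Monotone c)
    (B : ℤ)
    (alpha : Finset (Fin n) → ℕ)
    (halpha : ∀ R : Finset (Fin n), IsGreatest
      {k : ℕ | ∃ S : Finset (Fin n), IsStableAvoiding G R S ∧ S.card = k}
      (alpha R))
    (R : Finset (Fin n)) (hRbudget : ∑ v ∈ R, c v ≤ B)
    (hRopt : ∀ R' : Finset (Fin n), ∑ v ∈ R', c v ≤ B → alpha R ≤ alpha R')
    (M : Finset (Fin n × Fin n)) (hM : IsMatchingAvoiding G R M)
    (hMmax : ∀ M' : Finset (Fin n × Fin n), IsMatchingAvoiding G R M' →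
      M'.card ≤ M.card)
    (ℓ : ℕ)
    (hℓB : ∑ v ∈ cheapest n ℓ \ matchEnds M, c v ≤ B)
    (hℓmax : ∀ ℓ' : ℕ, ℓ' ≤ n →
      (∑ v ∈ cheapest n ℓ' \ matchEnds M, c v ≤ B) → ℓ' ≤ ℓ) :
    (∑ v ∈ cheapest n ℓ \ matchEnds M, c v ≤ B) ∧
      ∀ R' : Finset (Fin n), ∑ v ∈ R', c v ≤ B →
        alpha (cheapest n ℓ \ matchEnds M) ≤ alpha R' := by
  refine ⟨hℓB, fun R' hR' => le_trans ?_ (hRopt R' hR')⟩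
  obtain ⟨S, hS, hScard⟩ := (halpha (cheapest n ℓ \ matchEnds M)).1
  have hS_bound := hS.card_add_card_add_card_le (hM.of_disjoint_matchEnds sdiff_disjoint)
  obtain ⟨T, hT, hT_bound⟩ := exists_isStableAvoiding_card_add_card_add_card_ge hbip M hMmax
  have hTR := (halpha R).2 ⟨T, hT, rfl⟩
  have hRcard := card_le_card_cheapest_sdiff c (fun v => (hcpos v).le) hcmono B _ R
    hM.disjoint_matchEnds hRbudget hℓmax
  rw [Fintype.card_fin] at hS_bound hT_bound
  omega

/-- From an optimal interdiction set `R` with maximum matching `M*` in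
`G[V \ R]`, the set `R* = V_ℓ \ V(M*)`, with `ℓ` the largest index keeping the
cost within budget, is also an optimal interdiction set. -/
theorem optimal_interdiction_from_matching {n : ℕ} (G : SimpleGraph (Fin n))
    (col : Fin n → Bool) (hbip : ∀ u v : Fin n, G.Adj u v → col u ≠ col v)
    (c : Fin n → ℤ) (hcpos : ∀ v, 0 < c v) (hcmono : Monotone c)
    (B : ℤ) (hB : 0 < B)
    (alpha : Finset (Fin n) → ℕ)
    (halpha : ∀ R : Finset (Fin n), IsGreatest
      {k : ℕ | ∃ S : Finset (Fin n), IsStableAvoiding G R S ∧ S.card = k}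
      (alpha R))
    (R : Finset (Fin n)) (hRbudget : ∑ v ∈ R, c v ≤ B)
    (hRopt : ∀ R' : Finset (Fin n), ∑ v ∈ R', c v ≤ B → alpha R ≤ alpha R')
    (M : Finset (Fin n × Fin n)) (hM : IsMatchingAvoiding G R M)
    (hMmax : ∀ M' : Finset (Fin n × Fin n), IsMatchingAvoiding G R M' →
      M'.card ≤ M.card)
    (ℓ : ℕ) (hℓn : ℓ ≤ n)
    (hℓB : ∑ v ∈ cheapest n ℓ \ matchEnds M, c v ≤ B)
    (hℓmax : ∀ ℓ' : ℕ, ℓ' ≤ n →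
      (∑ v ∈ cheapest n ℓ' \ matchEnds M, c v ≤ B) → ℓ' ≤ ℓ) :
    (∑ v ∈ cheapest n ℓ \ matchEnds M, c v ≤ B) ∧
      ∀ R' : Finset (Fin n), ∑ v ∈ R', c v ≤ B →
        alpha (cheapest n ℓ \ matchEnds M) ≤ alpha R' :=
  optimal_interdiction_from_matching_general G col hbip c hcpos hcmono B alpha halpha R hRbudget
    hRopt M hM hMmax ℓ hℓB hℓmax
end

section
/- Let G = (V, E) be bipartite, ℓ ∈ {0,…,n}, V_ℓ the ℓ cheapest vertices, and let M be a matching in G with c(V_ℓ \ V(M)) ≤ B, |V_ℓ ∩ V(M) ∩ I| = β_I, |V_ℓ ∩ V(M) ∩ J| = β_J, and |M| = γ. Then R = V_ℓ \ V(M) is a budget-feasible interdiction set with α(G[V \ R]) ≤ |V| − γ − ℓ + β_I + β_J. -/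
open Finset

/-- `M` is a matching of `G`. -/
def IsMatching' {V : Type*} (G : SimpleGraph V) (M : Finset (V × V)) : Prop :=
  (∀ p ∈ M, G.Adj p.1 p.2) ∧
    ∀ p ∈ M, ∀ q ∈ M, p ≠ q →
      p.1 ≠ q.1 ∧ p.1 ≠ q.2 ∧ p.2 ≠ q.1 ∧ p.2 ≠ q.2

/-- A matching `M` corresponding to a feasible quadruple `(ℓ, βI, βJ, γ)`
yields the budget-feasible interdiction set `R = V_ℓ \ V(M)` with
`α(G[V \ R]) ≤ |V| - γ - ℓ + βI + βJ`. -/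
theorem quadruple_value_bound {n : ℕ} (G : SimpleGraph (Fin n))
    (col : Fin n → Bool) (hbip : ∀ u v : Fin n, G.Adj u v → col u ≠ col v)
    (c : Fin n → ℤ) (hcpos : ∀ v, 0 < c v) (hcmono : Monotone c)
    (B : ℤ) (hB : 0 < B)
    (ℓ : ℕ) (hℓn : ℓ ≤ n) (βI βJ γ : ℕ)
    (M : Finset (Fin n × Fin n)) (hM : IsMatching' G M)
    (hbudget : ∑ v ∈ cheapest n ℓ \ matchEnds M, c v ≤ B)
    (hβI : ((cheapest n ℓ ∩ matchEnds M).filter (fun v => col v = false)).card = βI)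
    (hβJ : ((cheapest n ℓ ∩ matchEnds M).filter (fun v => col v = true)).card = βJ)
    (hγ : M.card = γ) :
    (∑ v ∈ cheapest n ℓ \ matchEnds M, c v ≤ B) ∧
      ∀ S : Finset (Fin n), IsStableAvoiding G (cheapest n ℓ \ matchEnds M) S →
        (S.card : ℤ) ≤ (n : ℤ) - γ - ℓ + βI + βJ := by
  refine ⟨hbudget, ?_⟩
  intro S hS
  obtain ⟨hSR, hSstab⟩ := hS
  set R := cheapest n ℓ \ matchEnds M with hR
  set A := cheapest n ℓ ∩ matchEnds M with hA
  -- cardinality of cheapest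
  have hch : (cheapest n ℓ).card = ℓ := by
    have he : cheapest n ℓ = (Finset.range ℓ).attachFin
        (fun m hm => lt_of_lt_of_le (Finset.mem_range.mp hm) hℓn) := by
      ext v; simp [cheapest, Finset.mem_attachFin]
    rw [he, Finset.card_attachFin, Finset.card_range]
  -- |A| = βI + βJ
  have hAcard : A.card = βI + βJ := by
    rw [← hβI, ← hβJ]
    have hsplit := Finset.card_filter_add_card_filter_not
      (s := A) (p := fun v => col v = false)
    have hneg : A.filter (fun v => ¬ col v = false) = A.filter (fun v => col v = true) := by
      apply Finset.filter_congr; intro v _; simp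
    rw [hneg] at hsplit
    omega
  -- |A| + |R| = ℓ
  have hAR : A.card + R.card = ℓ := by
    rw [hA, hR, Finset.card_inter_add_card_sdiff, hch]
  -- endpoint-selection map
  set f : Fin n × Fin n → Fin n := fun p => if p.1 ∈ S then p.2 else p.1 with hf
  have hMadj := hM.1
  have hMdist := hM.2
  have hfmem : ∀ p ∈ M, f p ∈ matchEnds M := by
    intro p hp
    by_cases h : p.1 ∈ S
    · simp only [hf, if_pos h, matchEnds, Finset.mem_union, Finset.mem_image]
      exact Or.inr ⟨p, hp, rfl⟩
    · simp only [hf, if_neg h, matchEnds, Finset.mem_union, Finset.mem_image]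
      exact Or.inl ⟨p, hp, rfl⟩
  have hfS : ∀ p ∈ M, f p ∉ S := by
    intro p hp
    by_cases h : p.1 ∈ S
    · simp only [hf, if_pos h]
      intro h2
      exact hSstab _ h _ h2 (hMadj p hp)
    · simp only [hf, if_neg h]; exact h
  have hfinj : Set.InjOn f M := by
    intro p hp q hq hpq
    by_contra hne
    obtain ⟨h1, h2, h3, h4⟩ := hMdist p hp q hq hne
    simp only [hf] at hpq
    split_ifs at hpq <;> simp_all
  have hTcard : (M.image f).card = γ := by
    rw [Finset.card_image_of_injOn (by simpa using hfinj), hγ]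
  have hdisj : Disjoint S (M.image f) := by
    rw [Finset.disjoint_right]
    intro a ha
    obtain ⟨p, hp, rfl⟩ := Finset.mem_image.mp ha
    exact hfS p hp
  have hsub : S ∪ M.image f ⊆ Finset.univ \ R := by
    intro v hv
    rcases Finset.mem_union.mp hv with h | h
    · simp only [Finset.mem_sdiff, Finset.mem_univ, true_and]
      exact hSR v h
    · obtain ⟨p, hp, rfl⟩ := Finset.mem_image.mp h
      have hend := hfmem p hp
      simp only [Finset.mem_sdiff, Finset.mem_univ, true_and, hR, Finset.mem_sdiff]
      intro hcontra
      exact hcontra.2 hend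
  have hcard1 : S.card + γ ≤ (Finset.univ \ R : Finset (Fin n)).card := by
    calc S.card + γ = (S ∪ M.image f).card := by
          rw [Finset.card_union_of_disjoint hdisj, hTcard]
      _ ≤ _ := Finset.card_le_card hsub
  have hcard2 : (Finset.univ \ R : Finset (Fin n)).card + R.card = n := by
    rw [Finset.card_sdiff_add_card_eq_card (Finset.subset_univ R), Finset.card_univ,
      Fintype.card_fin]
  omega
end
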